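/- For every r ≥ 2 and every n ≥ 2, there exists a partition λ of n with dim_loc(λ) ≥ r if and only if there exists a partition λ of n with s(λ) ≥ r or t(λ) ≥ r. Consequently, the threshold τ_≥(r) = min{n : L_{≥r}(n) ≠ ∅} equals the least n for which some partition of n admits at least r admissible transfers with a common removable corner or at least r admissible transfers with a common addable corner. -/

import Mathlib

/-! Every neighbour of `λ` in `Gₙ` is a transfer `λ(c→a)`, and two transfers `λ(c₁→a₁)`,
`λ(c₂→a₂)` are adjacent exactly when they differ but share the removed or the added cell.
A family of pairs in which any two share a coordinate shares one coordinate throughout, so the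
transfers in a clique through `λ` all have a common removable or a common addable corner. Hence
`dim_loc(λ) = max (s(λ), t(λ))`, from which both claims follow. -/

/-- Vertices of the partition graph: partitions of `n`, encoded as
Young diagrams with `n` cells. -/
abbrev PartitionVertex (n : ℕ) := {μ : YoungDiagram // μ.card = n}

/-- The partition graph `Gₙ`: two distinct partitions of `n` are adjacent iff the
Young diagram of one is obtained from the other by removing one cell and adding one cell. -/
def partitionGraph (n : ℕ) : SimpleGraph (PartitionVertex n) where
  Adj μ ν := μ ≠ ν ∧ (μ.1.cells \ ν.1.cells).card = 1 ∧ (ν.1.cells \ μ.1.cells).card = 1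
  symm := ⟨fun _ _ ⟨h, h1, h2⟩ => ⟨h.symm, h2, h1⟩⟩
  loopless := ⟨fun _ ⟨h, _⟩ => h rfl⟩

/-- `dimLoc n lam` : the largest `d` such that some clique of `Gₙ` of cardinality `d+1`
contains `lam`. -/
noncomputable def dimLoc (n : ℕ) (lam : PartitionVertex n) : ℕ :=
  sSup {d : ℕ | ∃ s : Finset (PartitionVertex n),
    (partitionGraph n).IsClique (↑s : Set (PartitionVertex n)) ∧ s.card = d + 1 ∧ lam ∈ s}

/-- The simplex layer `L_r(n)`. -/
def layer (n r : ℕ) : Set (PartitionVertex n) := {lam | dimLoc n lam = r}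

/-- The upper simplex layer `L_{≥ r}(n)`. -/
def layerGe (n r : ℕ) : Set (PartitionVertex n) := {lam | r ≤ dimLoc n lam}

/-- `Δ(n)` : the maximal local simplex dimension over all partitions of `n`. -/
noncomputable def Delta (n : ℕ) : ℕ := ⨆ lam : PartitionVertex n, dimLoc n lam

/-- `c` is a removable corner of the Young diagram `μ`. -/
def Removable (μ : YoungDiagram) (c : ℕ × ℕ) : Prop :=
  c ∈ μ.cells ∧ IsLowerSet (↑(μ.cells.erase c) : Set (ℕ × ℕ))

/-- `a` is an addable corner of the Young diagram `μ`. -/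
def Addable (μ : YoungDiagram) (a : ℕ × ℕ) : Prop :=
  a ∉ μ.cells ∧ IsLowerSet (↑(insert a μ.cells) : Set (ℕ × ℕ))

/-- The cells of `λ(c→a)`: remove the cell `c` and add the cell `a`. -/
def transferCells (μ : YoungDiagram) (c a : ℕ × ℕ) : Finset (ℕ × ℕ) :=
  insert a (μ.cells.erase c)

/-- The transfer `λ(c→a)` is admissible: the result is again a Young diagram
and is different from `λ`. -/
def Admissible (μ : YoungDiagram) (c a : ℕ × ℕ) : Prop :=
  IsLowerSet (↑(transferCells μ c a) : Set (ℕ × ℕ)) ∧ transferCells μ c a ≠ μ.cells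

/-- `A_max(λ,c)`: the addable corners `a` for which `λ(c→a)` is admissible. -/
def Amax (μ : YoungDiagram) (c : ℕ × ℕ) : Set (ℕ × ℕ) :=
  {a | Addable μ a ∧ Admissible μ c a}

/-- `C_max(λ,a)`: the removable corners `c` for which `λ(c→a)` is admissible. -/
def Cmax (μ : YoungDiagram) (a : ℕ × ℕ) : Set (ℕ × ℕ) :=
  {c | Removable μ c ∧ Admissible μ c a}

/-- The full star-simplex `Σ^star_max(λ,c) = {λ} ∪ {λ(c→a) : a ∈ A_max(λ,c)}`,
as a set of vertices of `Gₙ`. -/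
def starSimplex (n : ℕ) (lam : PartitionVertex n) (c : ℕ × ℕ) : Set (PartitionVertex n) :=
  {ν | ν = lam ∨ ∃ a ∈ Amax lam.1 c, ν.1.cells = transferCells lam.1 c a}

/-- The full top-simplex `Σ^top_max(λ,a) = {λ} ∪ {λ(c→a) : c ∈ C_max(λ,a)}`,
as a set of vertices of `Gₙ`. -/
def topSimplex (n : ℕ) (lam : PartitionVertex n) (a : ℕ × ℕ) : Set (PartitionVertex n) :=
  {ν | ν = lam ∨ ∃ c ∈ Cmax lam.1 a, ν.1.cells = transferCells lam.1 c a}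

/-- The star capacity `s(λ) = max over removable corners c of |A_max(λ,c)|`. -/
noncomputable def starCap (μ : YoungDiagram) : ℕ :=
  sSup {k | ∃ c : ℕ × ℕ, Removable μ c ∧ (Amax μ c).ncard = k}

/-- The top capacity `t(λ) = max over addable corners a of |C_max(λ,a)|`. -/
noncomputable def topCap (μ : YoungDiagram) : ℕ :=
  sSup {k | ∃ a : ℕ × ℕ, Addable μ a ∧ (Cmax μ a).ncard = k}

/-- The threshold `τ_≥(r) = min {n : L_{≥r}(n) ≠ ∅}`. -/
noncomputable def tauGe (r : ℕ) : ℕ := sInf {n | (layerGe n r).Nonempty}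

open Finset

/-- Equivalent to `c ∈ Rem(μ)`, `a ∈ Add(μ)` and `μ(c→a)` admissible (`mem_Amax_iff`,
`mem_Cmax_iff`), but without the corner conditions, which follow. -/
def IsTransfer (μ : YoungDiagram) (c a : ℕ × ℕ) : Prop :=
  c ∈ μ.cells ∧ a ∉ μ.cells ∧ IsLowerSet (transferCells μ c a : Set (ℕ × ℕ))

theorem Finset.subset_range_card_product_of_isLowerSet {s : Finset (ℕ × ℕ)}
    (hs : IsLowerSet (s : Set (ℕ × ℕ))) : s ⊆ range s.card ×ˢ range s.card := by
  rintro ⟨i, j⟩ hij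
  have hbox : Icc (0, 0) (i, j) ⊆ s := fun p hp => hs (mem_Icc.1 hp).2 hij
  have hcard := card_le_card hbox
  rw [card_Icc_prod, Nat.card_Icc, Nat.card_Icc] at hcard
  simp only [Nat.sub_zero] at hcard
  simp only [mem_product, mem_range]
  constructor <;> nlinarith

section Transfer

variable {μ : YoungDiagram} {c a c₁ a₁ c₂ a₂ x : ℕ × ℕ}

theorem mem_transferCells : x ∈ transferCells μ c a ↔ x = a ∨ x ∈ μ.cells ∧ x ≠ c := by
  rw [transferCells, mem_insert, mem_erase, and_comm]

theorem card_transferCells (hc : c ∈ μ.cells) (ha : a ∉ μ.cells) :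
    (transferCells μ c a).card = μ.card := by
  rw [transferCells, card_insert_of_notMem (fun h => ha (mem_of_mem_erase h)),
    card_erase_add_one hc]

theorem cells_sdiff_transferCells (hc : c ∈ μ.cells) (ha : a ∉ μ.cells) :
    μ.cells \ transferCells μ c a = {c} := by
  ext x
  simp only [mem_sdiff, mem_transferCells, mem_singleton]
  grind

theorem card_transferCells_sdiff_transferCells (hc₂ : c₂ ∈ μ.cells) (ha₁ : a₁ ∉ μ.cells)
    (ha₂ : a₂ ∉ μ.cells) :
    (transferCells μ c₁ a₁ \ transferCells μ c₂ a₂).card =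
      (if a₁ = a₂ then 0 else 1) + (if c₂ = c₁ then 0 else 1) := by
  have hsdiff : transferCells μ c₁ a₁ \ transferCells μ c₂ a₂ = {a₁} \ {a₂} ∪ {c₂} \ {c₁} := by
    ext x
    simp only [mem_sdiff, mem_union, mem_transferCells, mem_singleton]
    grind
  rw [hsdiff, card_union_of_disjoint]
  · split_ifs <;> simp_all [sdiff_eq_left.2]
  · exact (disjoint_singleton.2 (by rintro rfl; exact ha₁ hc₂)).mono sdiff_subset sdiff_subset

theorem IsTransfer.removable (h : IsTransfer μ c a) : Removable μ c := by
  refine ⟨h.1, fun p q hqp hp => ?_⟩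
  simp only [coe_erase, Set.mem_sdiff, mem_coe, Set.mem_singleton_iff] at hp ⊢
  refine ⟨μ.isLowerSet hqp hp.1, ?_⟩
  rintro rfl
  have hq : q ∈ transferCells μ q a := h.2.2 hqp (mem_transferCells.2 (.inr hp))
  exact (mem_transferCells.1 hq).elim (fun e => h.2.1 (e ▸ h.1)) (fun h' => h'.2 rfl)

theorem IsTransfer.addable (h : IsTransfer μ c a) : Addable μ a := by
  refine ⟨h.2.1, fun p q hqp hp => ?_⟩
  simp only [coe_insert, Set.mem_insert_iff, mem_coe] at hp ⊢
  rcases hp with rfl | hp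
  · exact (mem_transferCells.1 (h.2.2 hqp (mem_transferCells.2 (.inl rfl)))).imp_right And.left
  · exact .inr (μ.isLowerSet hqp hp)

theorem IsTransfer.admissible (h : IsTransfer μ c a) : Admissible μ c a := by
  refine ⟨h.2.2, fun e => ?_⟩
  have hc : c ∈ transferCells μ c a := e ▸ h.1
  exact (mem_transferCells.1 hc).elim (fun e => h.2.1 (e ▸ h.1)) (fun h' => h'.2 rfl)

theorem mem_Amax_iff (hc : c ∈ μ.cells) : a ∈ Amax μ c ↔ IsTransfer μ c a :=
  ⟨fun h => ⟨hc, h.1.1, h.2.1⟩, fun h => ⟨h.addable, h.admissible⟩⟩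

theorem mem_Cmax_iff (ha : a ∉ μ.cells) : c ∈ Cmax μ a ↔ IsTransfer μ c a :=
  ⟨fun h => ⟨h.1.1, ha, h.2.1⟩, fun h => ⟨h.removable, h.admissible⟩⟩

theorem Addable.mem_range_product (h : Addable μ a) :
    a ∈ range (μ.card + 1) ×ˢ range (μ.card + 1) := by
  have := subset_range_card_product_of_isLowerSet h.2 (mem_insert_self a μ.cells)
  rwa [card_insert_of_notMem h.1] at this

theorem Amax_subset_range_product (μ : YoungDiagram) (c : ℕ × ℕ) :
    Amax μ c ⊆ ↑(range (μ.card + 1) ×ˢ range (μ.card + 1)) :=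
  fun _ ha => ha.1.mem_range_product

theorem Amax_finite (μ : YoungDiagram) (c : ℕ × ℕ) : (Amax μ c).Finite :=
  (finite_toSet _).subset (Amax_subset_range_product μ c)

theorem Cmax_subset_cells (μ : YoungDiagram) (a : ℕ × ℕ) : Cmax μ a ⊆ ↑μ.cells :=
  fun _ hc => hc.1.1

theorem Cmax_finite (μ : YoungDiagram) (a : ℕ × ℕ) : (Cmax μ a).Finite :=
  (finite_toSet _).subset (Cmax_subset_cells μ a)

theorem card_le_starCap {A : Finset (ℕ × ℕ)} (hA : ∀ a ∈ A, IsTransfer μ c a) :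
    A.card ≤ starCap μ := by
  obtain rfl | ⟨a₀, ha₀⟩ := A.eq_empty_or_nonempty
  · exact card_empty.trans_le (Nat.zero_le _)
  have hbdd : BddAbove {k | ∃ c : ℕ × ℕ, Removable μ c ∧ (Amax μ c).ncard = k} := by
    refine ⟨(range (μ.card + 1) ×ˢ range (μ.card + 1)).card, ?_⟩
    rintro k ⟨c', -, rfl⟩
    exact (Set.ncard_le_ncard (Amax_subset_range_product μ c') (finite_toSet _)).trans
      (Set.ncard_coe_finset _).le
  calc A.card = (A : Set (ℕ × ℕ)).ncard := (Set.ncard_coe_finset A).symm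
    _ ≤ (Amax μ c).ncard :=
      Set.ncard_le_ncard (fun a ha => (mem_Amax_iff (hA a₀ ha₀).1).2 (hA a ha)) (Amax_finite μ c)
    _ ≤ starCap μ := le_csSup hbdd ⟨c, (hA a₀ ha₀).removable, rfl⟩

theorem card_le_topCap {C : Finset (ℕ × ℕ)} (hC : ∀ c ∈ C, IsTransfer μ c a) :
    C.card ≤ topCap μ := by
  obtain rfl | ⟨c₀, hc₀⟩ := C.eq_empty_or_nonempty
  · exact card_empty.trans_le (Nat.zero_le _)
  have hbdd : BddAbove {k | ∃ a : ℕ × ℕ, Addable μ a ∧ (Cmax μ a).ncard = k} := by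
    refine ⟨μ.card, ?_⟩
    rintro k ⟨a', -, rfl⟩
    exact (Set.ncard_le_ncard (Cmax_subset_cells μ a') (finite_toSet _)).trans
      (Set.ncard_coe_finset _).le
  calc C.card = (C : Set (ℕ × ℕ)).ncard := (Set.ncard_coe_finset C).symm
    _ ≤ (Cmax μ a).ncard :=
      Set.ncard_le_ncard (fun c hc => (mem_Cmax_iff (hC c₀ hc₀).2.1).2 (hC c hc)) (Cmax_finite μ a)
    _ ≤ topCap μ := le_csSup hbdd ⟨a, (hC c₀ hc₀).addable, rfl⟩

end Transfer

theorem Set.Pairwise.exists_forall_fst_eq_or_exists_forall_snd_eq {α β : Type*} [Nonempty α]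
    {S : Set (α × β)} (h : S.Pairwise fun p q => p.1 = q.1 ∨ p.2 = q.2) :
    (∃ x, ∀ p ∈ S, p.1 = x) ∨ ∃ y, ∀ p ∈ S, p.2 = y := by
  rcases S.eq_empty_or_nonempty with rfl | ⟨p₀, hp₀⟩
  · exact .inl ⟨Classical.arbitrary α, fun _ hp => hp.elim⟩
  by_cases hfst : ∀ p ∈ S, p.1 = p₀.1
  · exact .inl ⟨p₀.1, hfst⟩
  push Not at hfst
  obtain ⟨p₁, hp₁, hne⟩ := hfst
  have hsnd : p₁.2 = p₀.2 := (h hp₁ hp₀ (fun e => hne (e ▸ rfl))).resolve_left hne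
  -- any `p` differs in the first coordinate from `p₀` or from `p₁`
  refine .inr ⟨p₀.2, fun p hp => ?_⟩
  by_cases hp0 : p.1 = p₀.1
  · have hp1 : p.1 ≠ p₁.1 := hp0 ▸ Ne.symm hne
    exact ((h hp hp₁ (fun e => hp1 (e ▸ rfl))).resolve_left hp1).trans hsnd
  · exact (h hp hp₀ (fun e => hp0 (e ▸ rfl))).resolve_left hp0

theorem PartitionVertex.cells_subset_range_product {n : ℕ} (lam : PartitionVertex n) :
    lam.1.cells ⊆ range n ×ˢ range n := by
  have h := subset_range_card_product_of_isLowerSet lam.1.isLowerSet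
  rwa [show lam.1.cells.card = n from lam.2] at h

instance (n : ℕ) : Finite (PartitionVertex n) :=
  Finite.of_injective
    (fun lam : PartitionVertex n => (⟨lam.1.cells, mem_powerset.2 lam.cells_subset_range_product⟩ :
      (range n ×ˢ range n).powerset))
    fun _ _ h => Subtype.ext (YoungDiagram.ext (congrArg Subtype.val h))

section PartitionGraph

variable {n : ℕ} {lam ν : PartitionVertex n} {c a c₁ a₁ c₂ a₂ : ℕ × ℕ}

theorem partitionGraph_adj_iff :
    (partitionGraph n).Adj lam ν ↔ (lam.1.cells \ ν.1.cells).card = 1 := by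
  refine ⟨fun h => h.2.1, fun h => ⟨?_, h, ?_⟩⟩
  · rintro rfl
    simp at h
  · rw [card_sdiff_comm (ν.2.trans lam.2.symm), h]

def PartitionVertex.transfer (lam : PartitionVertex n) (h : IsTransfer lam.1 c a) :
    PartitionVertex n :=
  ⟨⟨transferCells lam.1 c a, h.2.2⟩, (card_transferCells h.1 h.2.1).trans lam.2⟩

theorem PartitionVertex.transfer_cells (h : IsTransfer lam.1 c a) :
    (lam.transfer h).1.cells = transferCells lam.1 c a :=
  rfl

theorem partitionGraph_adj_transfer (h : IsTransfer lam.1 c a) :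
    (partitionGraph n).Adj lam (lam.transfer h) := by
  rw [partitionGraph_adj_iff, PartitionVertex.transfer_cells,
    cells_sdiff_transferCells h.1 h.2.1, card_singleton]

theorem partitionGraph_adj_transfer_transfer_iff (h₁ : IsTransfer lam.1 c₁ a₁)
    (h₂ : IsTransfer lam.1 c₂ a₂) :
    (partitionGraph n).Adj (lam.transfer h₁) (lam.transfer h₂) ↔
      (c₁ ≠ c₂ ∨ a₁ ≠ a₂) ∧ (c₁ = c₂ ∨ a₁ = a₂) := by
  rw [partitionGraph_adj_iff, PartitionVertex.transfer_cells, PartitionVertex.transfer_cells,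
    card_transferCells_sdiff_transferCells h₂.1 h₁.2.1 h₂.2.1]
  split_ifs <;> grind

theorem exists_isTransfer_of_adj (h : (partitionGraph n).Adj lam ν) :
    ∃ p : (ℕ × ℕ) × (ℕ × ℕ), ∃ hp : IsTransfer lam.1 p.1 p.2, lam.transfer hp = ν := by
  obtain ⟨-, h₁, h₂⟩ := h
  obtain ⟨c, hc⟩ := card_eq_one.1 h₁
  obtain ⟨a, ha⟩ := card_eq_one.1 h₂
  simp only [Finset.ext_iff, mem_sdiff, mem_singleton] at hc ha
  have hcells : transferCells lam.1 c a = ν.1.cells := by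
    ext x
    rw [mem_transferCells]
    grind
  have hp : IsTransfer lam.1 c a :=
    ⟨((hc c).2 rfl).1, ((ha a).2 rfl).2, hcells ▸ ν.1.isLowerSet⟩
  exact ⟨(c, a), hp, Subtype.ext (YoungDiagram.ext hcells)⟩

theorem bddAbove_dimLoc_set (lam : PartitionVertex n) :
    BddAbove {d : ℕ | ∃ s : Finset (PartitionVertex n),
      (partitionGraph n).IsClique (s : Set (PartitionVertex n)) ∧ s.card = d + 1 ∧ lam ∈ s} := by
  have := Fintype.ofFinite (PartitionVertex n)
  refine ⟨Fintype.card (PartitionVertex n), ?_⟩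
  rintro d ⟨s, -, hs, -⟩
  have := s.card_le_univ
  omega

theorem card_le_dimLoc_add_one {s : Finset (PartitionVertex n)}
    (hs : (partitionGraph n).IsClique (s : Set (PartitionVertex n))) (hlam : lam ∈ s) :
    s.card ≤ dimLoc n lam + 1 := by
  obtain ⟨d, hd⟩ := Nat.exists_eq_add_one.2 (card_pos.2 ⟨lam, hlam⟩)
  rw [hd]
  exact Nat.add_le_add_right (le_csSup (bddAbove_dimLoc_set lam) ⟨s, hs, hd, hlam⟩) 1

theorem exists_isClique_card_eq_dimLoc (lam : PartitionVertex n) :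
    ∃ s : Finset (PartitionVertex n), (partitionGraph n).IsClique (s : Set (PartitionVertex n)) ∧
      s.card = dimLoc n lam + 1 ∧ lam ∈ s := by
  refine Nat.sSup_mem ?_ (bddAbove_dimLoc_set lam)
  exact ⟨0, {lam}, by simp, by simp, by simp⟩

end PartitionGraph

section Capacities

variable {n : ℕ}

theorem card_le_dimLoc_of_pairwise (lam : PartitionVertex n)
    {Q : Finset ((ℕ × ℕ) × (ℕ × ℕ))} (hQ : ∀ p ∈ Q, IsTransfer lam.1 p.1 p.2)
    (hpw : (Q : Set ((ℕ × ℕ) × (ℕ × ℕ))).Pairwise fun p q => p.1 = q.1 ∨ p.2 = q.2) :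
    Q.card ≤ dimLoc n lam := by
  classical
  let g : Q → PartitionVertex n := fun p => lam.transfer (hQ p p.2)
  have hadj : ∀ p q : Q, p ≠ q → (partitionGraph n).Adj (g p) (g q) := fun p q hpq =>
    (partitionGraph_adj_transfer_transfer_iff _ _).2
      ⟨not_and_or.1 (hpq ∘ Subtype.ext ∘ Prod.ext_iff.2), hpw p.2 q.2 (Subtype.coe_ne_coe.2 hpq)⟩
  have hg : Function.Injective g := fun p q h => by_contra fun hpq => (hadj p q hpq).ne h
  have hlam : lam ∉ univ.image g := by
    simpa using fun p hp => (partitionGraph_adj_transfer (hQ p hp)).ne'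
  have hclique :
      (partitionGraph n).IsClique ((insert lam (univ.image g) : Finset _) : Set (PartitionVertex n)) := by
    rw [coe_insert, SimpleGraph.isClique_insert, coe_image]
    refine ⟨?_, ?_⟩
    · rintro - ⟨p, -, rfl⟩ - ⟨q, -, rfl⟩ hpq
      exact hadj p q (hpq ∘ congrArg g)
    · rintro - ⟨p, -, rfl⟩ -
      exact partitionGraph_adj_transfer _
  have hcard := card_le_dimLoc_add_one hclique (mem_insert_self lam _)
  rwa [card_insert_of_notMem hlam, card_image_of_injective _ hg, card_univ, Fintype.card_coe,
    Nat.add_le_add_iff_right] at hcard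

theorem exists_pairwise_card_eq_dimLoc (lam : PartitionVertex n) :
    ∃ Q : Finset ((ℕ × ℕ) × (ℕ × ℕ)), (∀ p ∈ Q, IsTransfer lam.1 p.1 p.2) ∧
      (Q : Set ((ℕ × ℕ) × (ℕ × ℕ))).Pairwise (fun p q => p.1 = q.1 ∨ p.2 = q.2) ∧
      Q.card = dimLoc n lam := by
  classical
  obtain ⟨K, hK, hcard, hlam⟩ := exists_isClique_card_eq_dimLoc lam
  have hT : ∀ ν ∈ K.erase lam,
      ∃ p : (ℕ × ℕ) × (ℕ × ℕ), ∃ hp : IsTransfer lam.1 p.1 p.2, lam.transfer hp = ν :=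
    fun ν hν => exists_isTransfer_of_adj (hK hlam (mem_of_mem_erase hν) (ne_of_mem_erase hν).symm)
  choose! f hf hfν using hT
  have hinj : Set.InjOn f (K.erase lam) := fun ν₁ h₁ ν₂ h₂ he => by
    rw [← hfν ν₁ h₁, ← hfν ν₂ h₂]
    exact Subtype.ext (YoungDiagram.ext (by simp only [PartitionVertex.transfer_cells, he]))
  refine ⟨(K.erase lam).image f, forall_mem_image.2 hf, ?_, ?_⟩
  · rw [coe_image]
    rintro - ⟨ν₁, h₁, rfl⟩ - ⟨ν₂, h₂, rfl⟩ hne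
    have hadj := hK (mem_of_mem_erase h₁) (mem_of_mem_erase h₂) (hne ∘ congrArg f)
    rw [← hfν ν₁ h₁, ← hfν ν₂ h₂, partitionGraph_adj_transfer_transfer_iff] at hadj
    exact hadj.2
  · rw [card_image_of_injOn hinj, card_erase_of_mem hlam, hcard, Nat.add_sub_cancel]

theorem starCap_le_dimLoc (lam : PartitionVertex n) : starCap lam.1 ≤ dimLoc n lam := by
  refine csSup_le' ?_
  rintro k ⟨c, hc, rfl⟩
  have hQ : ∀ p ∈ {c} ×ˢ (Amax_finite lam.1 c).toFinset, IsTransfer lam.1 p.1 p.2 := by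
    simp only [mem_product, mem_singleton, Set.Finite.mem_toFinset]
    rintro ⟨c', a⟩ ⟨rfl, ha⟩
    exact (mem_Amax_iff hc.1).1 ha
  calc (Amax lam.1 c).ncard = ({c} ×ˢ (Amax_finite lam.1 c).toFinset).card := by
        rw [card_product, card_singleton, one_mul, Set.ncard_eq_toFinset_card _ (Amax_finite _ _)]
    _ ≤ dimLoc n lam :=
      card_le_dimLoc_of_pairwise lam hQ fun p hp q hq _ =>
        .inl ((mem_singleton.1 (mem_product.1 hp).1).trans (mem_singleton.1 (mem_product.1 hq).1).symm)

theorem topCap_le_dimLoc (lam : PartitionVertex n) : topCap lam.1 ≤ dimLoc n lam := by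
  refine csSup_le' ?_
  rintro k ⟨a, ha, rfl⟩
  have hQ : ∀ p ∈ (Cmax_finite lam.1 a).toFinset ×ˢ {a}, IsTransfer lam.1 p.1 p.2 := by
    simp only [mem_product, mem_singleton, Set.Finite.mem_toFinset]
    rintro ⟨c, a'⟩ ⟨hc, rfl⟩
    exact (mem_Cmax_iff ha.1).1 hc
  calc (Cmax lam.1 a).ncard = ((Cmax_finite lam.1 a).toFinset ×ˢ {a}).card := by
        rw [card_product, card_singleton, mul_one, Set.ncard_eq_toFinset_card _ (Cmax_finite _ _)]
    _ ≤ dimLoc n lam :=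
      card_le_dimLoc_of_pairwise lam hQ fun p hp q hq _ =>
        .inr ((mem_singleton.1 (mem_product.1 hp).2).trans (mem_singleton.1 (mem_product.1 hq).2).symm)

theorem dimLoc_le_max_starCap_topCap (lam : PartitionVertex n) :
    dimLoc n lam ≤ max (starCap lam.1) (topCap lam.1) := by
  obtain ⟨Q, hQ, hpw, hcard⟩ := exists_pairwise_card_eq_dimLoc lam
  rw [← hcard]
  rcases hpw.exists_forall_fst_eq_or_exists_forall_snd_eq with ⟨c, hc⟩ | ⟨a, ha⟩
  · refine le_max_of_le_left ?_
    rw [← card_image_of_injOn fun p hp q hq h => Prod.ext ((hc p hp).trans (hc q hq).symm) h]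
    refine card_le_starCap (c := c) fun a ha => ?_
    obtain ⟨p, hp, rfl⟩ := mem_image.1 ha
    exact hc p hp ▸ hQ p hp
  · refine le_max_of_le_right ?_
    rw [← card_image_of_injOn fun p hp q hq h => Prod.ext h ((ha p hp).trans (ha q hq).symm)]
    refine card_le_topCap (a := a) fun c hc => ?_
    obtain ⟨p, hp, rfl⟩ := mem_image.1 hc
    exact ha p hp ▸ hQ p hp

theorem dimLoc_eq_max_starCap_topCap (lam : PartitionVertex n) :
    dimLoc n lam = max (starCap lam.1) (topCap lam.1) :=
  (dimLoc_le_max_starCap_topCap lam).antisymm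
    (max_le (starCap_le_dimLoc lam) (topCap_le_dimLoc lam))

end Capacities

theorem threshold_reduction_general (r : ℕ) :
    (∀ n : ℕ, 2 ≤ n →
      ((∃ lam : PartitionVertex n, r ≤ dimLoc n lam) ↔
        (∃ lam : PartitionVertex n, r ≤ starCap lam.1 ∨ r ≤ topCap lam.1))) ∧
    tauGe r = sInf {n : ℕ | ∃ lam : PartitionVertex n,
      r ≤ starCap lam.1 ∨ r ≤ topCap lam.1} := by
  have key : ∀ n (lam : PartitionVertex n),
      r ≤ dimLoc n lam ↔ r ≤ starCap lam.1 ∨ r ≤ topCap lam.1 := fun n lam => by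
    rw [dimLoc_eq_max_starCap_topCap, le_max_iff]
  refine ⟨fun n _ => exists_congr (key n), ?_⟩
  simp only [tauGe, layerGe, Set.Nonempty, Set.mem_ofPred_eq, key]

/-- For every `r ≥ 2` and every `n ≥ 2`, there exists `λ ⊢ n` with
`dim_loc(λ) ≥ r` iff there exists `λ ⊢ n` with `s(λ) ≥ r` or `t(λ) ≥ r`. Consequently,
`τ_≥(r)` equals the least `n` for which some partition of `n` admits at least `r` admissible
transfers with a common removable corner or at least `r` admissible transfers with a common
addable corner. -/
theorem threshold_reduction (r : ℕ) (hr : 2 ≤ r) :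
    (∀ n : ℕ, 2 ≤ n →
      ((∃ lam : PartitionVertex n, r ≤ dimLoc n lam) ↔
        (∃ lam : PartitionVertex n, r ≤ starCap lam.1 ∨ r ≤ topCap lam.1))) ∧
    tauGe r = sInf {n : ℕ | ∃ lam : PartitionVertex n,
      r ≤ starCap lam.1 ∨ r ≤ topCap lam.1} :=
  threshold_reduction_general r
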